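/- arXiv:1612.08979 — 2 statements merged into one kernel-verified Lean document; each statement's English description precedes it below -/
import Mathlib

section
/- Let σ be the standard two-dimensional irreducible representation of S₃ on ℂ², and let σ ⊗ σ be the representation of S₃ on ℂ² ⊗[ℂ] ℂ² given by g ↦ σ(g) ⊗ σ(g). Then the induced algebra homomorphism π_{σ⊗σ} : MonoidAlgebra ℂ S₃ → End_ℂ(ℂ² ⊗ ℂ²), sending Σ a_g·g to Σ a_g·(σ(g) ⊗ σ(g)), is injective. -/
/-!
A representation `ρ` of `G` induces an injective map on `k[G]` exactly when the operators `ρ g`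
are linearly independent. For the tensor square of the standard representation of `S₃` these
are the six Kronecker squares `M ⊗ₖ M` of the matrices of `σ`, and six of their sixteen entries
already force any vanishing linear combination to be trivial.
-/

open scoped TensorProduct Kronecker

namespace Representation

variable {k G V : Type*} [CommSemiring k] [Monoid G] [AddCommMonoid V] [Module k V]

theorem asAlgebraHom_apply_eq_linearCombination (ρ : Representation k G V)
    (x : MonoidAlgebra k G) :
    ρ.asAlgebraHom x = Finsupp.linearCombination k ρ x.coeff := by
  rw [asAlgebraHom_def, MonoidAlgebra.lift_apply, Finsupp.linearCombination_apply]

theorem injective_asAlgebraHom_iff_linearIndependent (ρ : Representation k G V) :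
    Function.Injective ρ.asAlgebraHom ↔ LinearIndependent k ρ := by
  have : ⇑ρ.asAlgebraHom = Finsupp.linearCombination k ρ ∘ MonoidAlgebra.coeffEquiv :=
    funext ρ.asAlgebraHom_apply_eq_linearCombination
  rw [this, MonoidAlgebra.coeffEquiv.injective_comp]
  rfl

end Representation

def permFinThreeWord : Fin 6 → Equiv.Perm (Fin 3) :=
  let s := Equiv.swap 0 1
  let c := finRotate 3
  ![1, c, c * c, s, s * c, s * (c * c)]

noncomputable def permFinThreeEquiv : Fin 6 ≃ Equiv.Perm (Fin 3) :=
  Equiv.ofBijective permFinThreeWord (by decide)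

def standardMatrix : Fin 6 → Matrix (Fin 2) (Fin 2) ℂ :=
  ![!![1, 0; 0, 1], !![-1, -1; 1, 0], !![0, 1; -1, -1],
    !![-1, -1; 0, 1], !![0, 1; 1, 0], !![1, 0; -1, -1]]

theorem apply_permFinThreeWord (σ : Representation ℂ (Equiv.Perm (Fin 3)) (Fin 2 → ℂ))
    (hswap : σ (Equiv.swap 0 1) = Matrix.mulVecLin !![-1, -1; 0, 1])
    (hcycle : σ (finRotate 3) = Matrix.mulVecLin !![-1, -1; 1, 0]) (i : Fin 6) :
    σ (permFinThreeWord i) = (standardMatrix i).mulVecLin := by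
  fin_cases i <;>
    simp [permFinThreeWord, standardMatrix, hswap, hcycle, Module.End.mul_eq_comp,
      ← Matrix.mulVecLin_mul, Module.End.one_eq_id, ← Matrix.mulVecLin_one, Matrix.one_fin_two]

theorem linearIndependent_kronecker_self_standardMatrix :
    LinearIndependent ℂ fun i => standardMatrix i ⊗ₖ standardMatrix i := by
  rw [Fintype.linearIndependent_iff]
  intro a ha
  have entry (p q : Fin 2 × Fin 2) :
      ∑ i, a i * (standardMatrix i p.1 q.1 * standardMatrix i p.2 q.2) = 0 := by
    simpa [Matrix.sum_apply] using congrFun₂ ha p q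
  simp only [Fin.sum_univ_six] at entry
  have e₁ : a 1 + a 3 = 0 := by simpa [standardMatrix] using entry (0, 0) (0, 1)
  have e₂ : -a 1 - a 5 = 0 := by simpa [standardMatrix, sub_eq_add_neg] using entry (0, 1) (0, 0)
  have e₃ : a 2 + a 5 = 0 := by simpa [standardMatrix] using entry (1, 1) (0, 1)
  have e₄ : -a 1 - a 2 + a 4 = 0 := by
    simpa [standardMatrix, sub_eq_add_neg] using entry (0, 1) (1, 0)
  have e₅ : a 0 - a 3 - a 5 = 0 := by
    simpa [standardMatrix, sub_eq_add_neg] using entry (0, 1) (0, 1)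
  have e₆ : a 0 + a 1 + a 3 + a 5 = 0 := by simpa [standardMatrix] using entry (0, 0) (0, 0)
  -- `e₁`, `e₂` give `a 3 = a 5 = -a 1`, so `e₆ - e₅` reads `-3 * a 1 = 0`.
  have h₁ : a 1 = 0 := by linear_combination (2 * e₁ - 2 * e₂ + e₅ - e₆) / 3
  have h₃ : a 3 = 0 := by linear_combination e₁ - h₁
  have h₅ : a 5 = 0 := by linear_combination -e₂ - h₁
  have h₂ : a 2 = 0 := by linear_combination e₃ - h₅
  have h₄ : a 4 = 0 := by linear_combination e₄ + h₁ + h₂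
  have h₀ : a 0 = 0 := by linear_combination e₅ + h₃ + h₅
  intro i
  fin_cases i <;> assumption

/-- Let `σ` be the standard two-dimensional irreducible representation of `S₃` on `ℂ²`
(determined by its values on the generators `(0 1)` and `(0 1 2)`). Then the algebra
homomorphism `ℂ[S₃] → End(ℂ² ⊗ ℂ²)` induced by the tensor product representation
`σ ⊗ σ`, `g ↦ σ(g) ⊗ σ(g)`, is injective. -/
theorem tensor_square_standard_rep_faithful
    (σ : Representation ℂ (Equiv.Perm (Fin 3)) (Fin 2 → ℂ))
    (hswap : σ (Equiv.swap 0 1) = Matrix.mulVecLin !![-1, -1; 0, 1])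
    (hcycle : σ (finRotate 3) = Matrix.mulVecLin !![-1, -1; 1, 0]) :
    Function.Injective ⇑(σ.tprod σ).asAlgebraHom := by
  rw [Representation.injective_asAlgebraHom_iff_linearIndependent,
    ← linearIndependent_equiv permFinThreeEquiv]
  let b := (Pi.basisFun ℂ (Fin 2)).tensorProduct (Pi.basisFun ℂ (Fin 2))
  have hmatrix : ∀ i, LinearMap.toMatrix b b ((σ.tprod σ) (permFinThreeEquiv i)) =
      standardMatrix i ⊗ₖ standardMatrix i := by
    intro i
    simp [b, permFinThreeEquiv, Representation.tprod_apply, TensorProduct.toMatrix_map,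
      apply_permFinThreeWord σ hswap hcycle, ← Matrix.toLin'_apply']
  refine LinearIndependent.of_comp (LinearMap.toMatrix b b).toLinearMap ?_
  have := linearIndependent_kronecker_self_standardMatrix
  rwa [← funext hmatrix] at this
end

section
/- Let G be an infinite group (with the discrete topology) and let ℓ²(G) = lp (fun _ : G => ℂ) 2. For g ∈ G let λ_g denote the bounded operator on ℓ²(G) given by left translation, (λ_g ξ)(h) = ξ(g⁻¹h). Let A be the topological closure of the star-subalgebra of bounded operators on ℓ²(G) generated by {λ_g : g ∈ G}. If T ∈ A and T is a compact operator, then T = 0. -/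
/-! The matrix coefficient `⟪δ_x, T δ_y⟫` of each `λ_g` depends only on `x y⁻¹`, and this survives
linear combinations and norm limits. Since the `λ_g` form a group closed under adjoints, the
star-algebra they generate is just their linear span, so every `T` in its closure satisfies
`⟪δ_x, T δ_y⟫ = ⟪δ_{xk}, T δ_{yk}⟫` for all `k`. If `T` is compact, it maps the orthonormal vectors
`δ_{yk}` (along any injective sequence of `k`) to vectors that tend to `0` along a subsequence,
so every coefficient of `T` vanishes. -/

open scoped InnerProductSpace lp
open Filter Topology

theorem StarAlgebra.coe_adjoin_submonoid_eq_span {R A : Type*} [CommSemiring R] [StarRing R]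
    [Semiring A] [StarRing A] [Algebra R A] [StarModule R A] (S : Submonoid A)
    (hS : ∀ x ∈ S, star x ∈ S) :
    (StarAlgebra.adjoin R (S : Set A) : Set A) = Submodule.span R (S : Set A) := by
  have hstar : (S : Set A) ∪ star (S : Set A) = S :=
    Set.union_eq_left.2 fun x hx => by simpa using hS _ hx
  calc (StarAlgebra.adjoin R (S : Set A) : Set A)
      = Algebra.adjoin R ((S : Set A) ∪ star (S : Set A)) := rfl
    _ = Submodule.span R (Submonoid.closure (S : Set A) : Set A) := by
      rw [hstar, ← Algebra.adjoin_eq_span]; rfl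
    _ = Submodule.span R (S : Set A) := by rw [Submonoid.closure_eq]

section lp

variable {ι 𝕜 : Type*} [RCLike 𝕜] [DecidableEq ι]

theorem HilbertBasis.coe_default :
    ⇑(default : HilbertBasis ι 𝕜 ℓ²(ι, 𝕜)) = fun i => lp.single 2 i 1 :=
  funext fun i => ((default : HilbertBasis ι 𝕜 ℓ²(ι, 𝕜)).repr_symm_single i).symm

theorem lp.orthonormal_single : Orthonormal 𝕜 fun i : ι => lp.single 2 i (1 : 𝕜) :=
  HilbertBasis.coe_default (ι := ι) (𝕜 := 𝕜) ▸ (default : HilbertBasis ι 𝕜 ℓ²(ι, 𝕜)).orthonormal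

theorem lp.dense_span_single :
    Dense (Submodule.span 𝕜 (Set.range fun i : ι => lp.single 2 i (1 : 𝕜)) : Set ℓ²(ι, 𝕜)) :=
  HilbertBasis.coe_default (ι := ι) (𝕜 := 𝕜) ▸ Submodule.dense_iff_topologicalClosure_eq_top.2
    (default : HilbertBasis ι 𝕜 ℓ²(ι, 𝕜)).dense_span

end lp

theorem Orthonormal.tendsto_inner_cofinite {𝕜 E ι : Type*} [RCLike 𝕜] [NormedAddCommGroup E]
    [InnerProductSpace 𝕜 E] {v : ι → E} (hv : Orthonormal 𝕜 v) (x : E) :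
    Tendsto (fun i => ⟪v i, x⟫_𝕜) cofinite (𝓝 0) := by
  rw [tendsto_zero_iff_norm_tendsto_zero]
  have := (Real.continuous_sqrt.tendsto 0).comp
    (Orthonormal.inner_products_summable x hv).tendsto_cofinite_zero
  simpa [Function.comp_def, Real.sqrt_sq (norm_nonneg _)] using this

theorem IsCompactOperator.exists_subseq_tendsto_zero_of_orthonormal
    {𝕜 E F ι : Type*} [RCLike 𝕜] [NormedAddCommGroup E] [InnerProductSpace 𝕜 E] [CompleteSpace E]
    [NormedAddCommGroup F] [InnerProductSpace 𝕜 F] [CompleteSpace F]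
    {T : E →L[𝕜] F} (hT : IsCompactOperator T) {v : ι → E} (hv : Orthonormal 𝕜 v)
    {e : ℕ → ι} (he : Function.Injective e) :
    ∃ φ : ℕ → ℕ, StrictMono φ ∧ Tendsto (fun n => T (v (e (φ n)))) atTop (𝓝 0) := by
  have hmem : ∀ n, T (v (e n)) ∈ closure (T '' Metric.closedBall 0 1) := fun n =>
    subset_closure ⟨v (e n), by simp [hv.1], rfl⟩
  obtain ⟨y, -, φ, hφ, hy⟩ := (hT.isCompact_closure_image_closedBall 1).tendsto_subseq hmem
  -- By Bessel's inequality `T (v i)` tends weakly to `0`, which identifies the norm limit `y`.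
  have hweak : Tendsto (fun n => ⟪T (v (e (φ n))), y⟫_𝕜) atTop (𝓝 0) := by
    simp_rw [← ContinuousLinearMap.adjoint_inner_right]
    exact (hv.tendsto_inner_cofinite _).comp <|
      Nat.cofinite_eq_atTop ▸ (he.comp hφ.injective).tendsto_cofinite
  have hlim : Tendsto (fun n => ⟪T (v (e (φ n))), y⟫_𝕜) atTop (𝓝 ⟪y, y⟫_𝕜) :=
    ((continuous_id.inner continuous_const).tendsto y).comp hy
  obtain rfl : y = 0 := inner_self_eq_zero.mp (tendsto_nhds_unique hlim hweak)
  exact ⟨φ, hφ, hy⟩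

namespace LeftRegular

variable {G : Type*} [Group G] {lam : G → (ℓ²(G, ℂ) →L[ℂ] ℓ²(G, ℂ))}
  (hlam : ∀ (g : G) (ξ : ℓ²(G, ℂ)) (h : G), (lam g ξ : G → ℂ) h = ξ (g⁻¹ * h))
include hlam

theorem apply_single [DecidableEq G] (g h : G) (a : ℂ) :
    lam g (lp.single 2 h a) = lp.single 2 (g * h) a := by
  ext x
  simp only [hlam, lp.single_apply, Pi.single_apply, inv_mul_eq_iff_eq_mul]

theorem map_one : lam 1 = 1 := by
  ext ξ x
  simp [hlam]

theorem map_mul (g h : G) : lam (g * h) = lam g * lam h := by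
  ext ξ x
  simp [hlam, mul_assoc]

theorem star_eq (g : G) : star (lam g) = lam g⁻¹ := by
  rw [ContinuousLinearMap.star_eq_adjoint, eq_comm, ContinuousLinearMap.eq_adjoint_iff]
  intro ξ η
  rw [lp.inner_eq_tsum, lp.inner_eq_tsum, ← (Equiv.mulLeft g⁻¹).tsum_eq]
  congr! 2 with x
  simp [hlam]

theorem coe_adjoin_eq_span :
    (StarAlgebra.adjoin ℂ (Set.range lam) : Set (ℓ²(G, ℂ) →L[ℂ] ℓ²(G, ℂ))) =
      Submodule.span ℂ (Set.range lam) :=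
  StarAlgebra.coe_adjoin_submonoid_eq_span
    { carrier := Set.range lam
      mul_mem' := by rintro _ _ ⟨g, rfl⟩ ⟨h, rfl⟩; exact ⟨g * h, map_mul hlam g h⟩
      one_mem' := ⟨1, map_one hlam⟩ }
    (by rintro _ ⟨g, rfl⟩; exact ⟨g⁻¹, (star_eq hlam g).symm⟩)

variable [DecidableEq G] {S : ℓ²(G, ℂ) →L[ℂ] ℓ²(G, ℂ)}
  (hS : S ∈ (StarAlgebra.adjoin ℂ (Set.range lam)).topologicalClosure)
include hS

theorem inner_single_mul_right (g h k : G) :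
    ⟪lp.single 2 (g * k) (1 : ℂ), S (lp.single 2 (h * k) 1)⟫_ℂ =
      ⟪lp.single 2 g (1 : ℂ), S (lp.single 2 h 1)⟫_ℂ := by
  let entry (a b : G) : (ℓ²(G, ℂ) →L[ℂ] ℓ²(G, ℂ)) →L[ℂ] ℂ :=
    (innerSL ℂ (lp.single 2 a (1 : ℂ))).comp (.apply ℂ _ (lp.single 2 b 1))
  have hgen : Set.EqOn (entry (g * k) (h * k)) (entry g h) (Set.range lam) := by
    rintro _ ⟨m, rfl⟩
    simp [entry, apply_single hlam, lp.inner_single_left, lp.single_apply, Pi.single_apply,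
      ← mul_assoc]
  have hS' : S ∈ closure (Submodule.span ℂ (Set.range lam) : Set _) := by
    rwa [← coe_adjoin_eq_span hlam, ← StarSubalgebra.topologicalClosure_coe]
  exact ContinuousLinearMap.eqOn_closure_span hgen hS'

theorem inner_single_apply_single_eq_zero [Infinite G] (hSc : IsCompactOperator S) (g h : G) :
    ⟪lp.single 2 g (1 : ℂ), S (lp.single 2 h 1)⟫_ℂ = 0 := by
  let e := Infinite.natEmbedding G
  obtain ⟨φ, -, hφ⟩ := hSc.exists_subseq_tendsto_zero_of_orthonormal lp.orthonormal_single
    ((mul_right_injective h).comp e.injective)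
  have hle : ∀ n, ‖⟪lp.single 2 g (1 : ℂ), S (lp.single 2 h 1)⟫_ℂ‖ ≤
      ‖S (lp.single 2 (h * e (φ n)) 1)‖ := by
    intro n
    rw [← inner_single_mul_right hlam hS g h (e (φ n))]
    refine (norm_inner_le_norm _ _).trans ?_
    simp [lp.norm_single]
  exact norm_le_zero_iff.mp (ge_of_tendsto' (tendsto_norm_zero.comp hφ) hle)

end LeftRegular

/-- Let `G` be an infinite discrete group and let `λ_g` be the left-translation
unitaries on `ℓ²(G)`, `(λ_g ξ)(h) = ξ(g⁻¹ h)`. Any compact operator belonging to the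
closure of the star-algebra generated by `{λ_g : g ∈ G}` (i.e. to the reduced group
C*-algebra of `G` acting on `ℓ²(G)`) is zero. -/
theorem reduced_group_Cstar_algebra_meets_compacts_trivially
    (G : Type) [Group G] [Infinite G]
    (lam : G → (lp (fun _ : G => ℂ) 2 →L[ℂ] lp (fun _ : G => ℂ) 2))
    (hlam : ∀ (g : G) (ξ : lp (fun _ : G => ℂ) 2) (h : G), (lam g ξ : ∀ _ : G, ℂ) h = ξ (g⁻¹ * h))
    (T : lp (fun _ : G => ℂ) 2 →L[ℂ] lp (fun _ : G => ℂ) 2)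
    (hT : T ∈ (StarAlgebra.adjoin ℂ (Set.range lam)).topologicalClosure)
    (hTcompact : IsCompactOperator T) :
    T = 0 := by
  classical
  have hcol : ∀ h, T (lp.single 2 h 1) = 0 := fun h => lp.ext <| funext fun g => by
    simpa [lp.inner_single_left] using
      LeftRegular.inner_single_apply_single_eq_zero hlam hT hTcompact g h
  exact ContinuousLinearMap.ext_on lp.dense_span_single <| by
    rintro _ ⟨h, rfl⟩
    exact hcol h
end
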